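/- Let H ≥ 1 and K ≥ 1 be integers and let v ∈ 𝒱_{H,K} be an H-achievable vector. Then for every k ∈ Fin K, D_{H,K−1}(v⁻ᵏ) ≠ 0 and v k = H · D_{H−1,K−1}(v⁻ᵏ) / D_{H,K−1}(v⁻ᵏ); consequently D_{H,K}(v) = 0. -/
import Mathlib


open scoped BigOperators

noncomputable section

def simplexInt (K : ℕ) : Set (Fin K → ℝ) :=
  {r | (∀ k, 0 < r k) ∧ ∑ k, r k = 1}

/-- Rising factorial `a^{(j)} = a (a+1) ⋯ (a+j-1)`. -/
def rise (a : ℝ) (j : ℕ) : ℝ := ∏ i ∈ Finset.range j, (a + i)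

/-- Elementary symmetric polynomial of degree `m` in the coordinates of `v`. -/
def esymm {K : ℕ} (m : ℕ) (v : Fin K → ℝ) : ℝ :=
  ∑ S ∈ Finset.univ.powersetCard m, ∏ k ∈ S, v k

/-- `D_{H,K}(v) = ∑_{m=0}^K (−H)^{(K−m)} σ_m(v)`. -/
def D (H K : ℕ) (v : Fin K → ℝ) : ℝ :=
  ∑ m ∈ Finset.range (K + 1), rise (-(H : ℝ)) (K - m) * esymm m v

/-- A vector `v` is `(H'+1)`-achievable if there is a bookmaking strategy `Ψ`
such that every decisive bet sequence yields total payout `v k*` on the last bet `k*`. -/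
def Achievable (K H' : ℕ) (v : Fin K → ℝ) : Prop :=
  ∃ Ψ : (h : Fin (H' + 1)) → (Fin h.val → Fin K) → (Fin K → ℝ),
    (∀ h hist, Ψ h hist ∈ simplexInt K) ∧
    ∀ q : Fin (H' + 1) → Fin K,
      (∑ h : Fin (H' + 1),
        if q h = q (Fin.last H')
        then 1 / Ψ h (fun i => q (Fin.castLE h.isLt.le i)) (q (Fin.last H'))
        else 0) = v (q (Fin.last H'))

lemma rise_zero (a : ℝ) : rise a 0 = 1 := by simp [rise]

lemma rise_succ (a : ℝ) (j : ℕ) : rise a (j+1) = rise a j * (a + j) :=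
  Finset.prod_range_succ _ _

lemma rise_succ' (a : ℝ) (j : ℕ) : rise a (j+1) = a * rise (a+1) j := by
  rw [rise, Finset.prod_range_succ', rise]
  rw [Finset.prod_congr rfl (fun x _ => by push_cast; ring : ∀ x ∈ Finset.range j, (a + ((x:ℕ)+1 : ℕ)) = (a+1+(x:ℕ)))]
  push_cast
  ring

lemma esymm_zero' {K : ℕ} (v : Fin K → ℝ) : esymm 0 v = 1 := by simp [esymm]

lemma esymm_overflow {K m : ℕ} (h : K < m) (v : Fin K → ℝ) : esymm m v = 0 := by
  rw [esymm, Finset.powersetCard_eq_empty.2 (by simpa using h), Finset.sum_empty]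

lemma esymm_comp_succAbove {K : ℕ} (m : ℕ) (v : Fin (K+1) → ℝ) (k : Fin (K+1)) :
    esymm m (v ∘ k.succAbove) =
      ∑ S ∈ (Finset.univ.erase k).powersetCard m, ∏ j ∈ S, v j := by
  have hmap : (Finset.univ : Finset (Fin K)).map (k.succAboveEmb) = Finset.univ.erase k := by
    ext j
    simp [Fin.succAboveEmb, Fin.exists_succAbove_eq_iff]
  rw [esymm, ← hmap, Finset.powersetCard_map, Finset.sum_map]
  refine Finset.sum_congr rfl fun S _ => ?_
  rw [RelEmbedding.coe_toEmbedding, Finset.mapEmbedding_apply, Finset.prod_map]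
  rfl

lemma esymm_rec {K : ℕ} (m : ℕ) (v : Fin (K+1) → ℝ) (k : Fin (K+1)) :
    esymm (m+1) v = esymm (m+1) (v ∘ k.succAbove) + v k * esymm m (v ∘ k.succAbove) := by
  rw [esymm_comp_succAbove, esymm_comp_succAbove, esymm]
  have key : Finset.powersetCard (m+1) (Finset.univ : Finset (Fin (K+1))) =
      Finset.powersetCard (m+1) (Finset.univ.erase k) ∪
        (Finset.powersetCard m (Finset.univ.erase k)).image (insert k) := by
    conv_lhs => rw [← Finset.insert_erase (Finset.mem_univ k)]
    exact Finset.powersetCard_succ_insert (Finset.notMem_erase _ _) _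
  have hdisj : Disjoint (Finset.powersetCard (m+1) (Finset.univ.erase k))
      ((Finset.powersetCard m (Finset.univ.erase k)).image (insert k)) := by
    rw [Finset.disjoint_left]
    rintro S hS hS'
    obtain ⟨T, hT, rfl⟩ := Finset.mem_image.mp hS'
    exact (Finset.mem_erase.mp
      ((Finset.mem_powersetCard.mp hS).1 (Finset.mem_insert_self k T))).1 rfl
  rw [key, Finset.sum_union hdisj]
  congr 1
  rw [Finset.sum_image, Finset.mul_sum]
  · refine Finset.sum_congr rfl fun S hS => ?_
    have hk : k ∉ S := fun hk =>
      (Finset.mem_erase.mp ((Finset.mem_powersetCard.mp hS).1 hk)).1 rfl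
    rw [Finset.prod_insert hk]
  · intro S hS T hT hST
    have hkS : k ∉ S := fun hk =>
      (Finset.mem_erase.mp ((Finset.mem_powersetCard.mp hS).1 hk)).1 rfl
    have hkT : k ∉ T := fun hk =>
      (Finset.mem_erase.mp ((Finset.mem_powersetCard.mp hT).1 hk)).1 rfl
    rw [← Finset.erase_insert hkS, ← Finset.erase_insert hkT, hST]

lemma D_decomp (H K : ℕ) (v : Fin (K+1) → ℝ) (k : Fin (K+1)) :
    D H (K+1) v = v k * D H K (v ∘ k.succAbove)
      + ∑ m ∈ Finset.range (K+1), rise (-(H : ℝ)) (K+1-m) * esymm m (v ∘ k.succAbove) := by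
  rw [D, Finset.sum_range_succ']
  have h1 : ∀ i ∈ Finset.range (K+1),
      rise (-(H:ℝ)) (K+1-(i+1)) * esymm (i+1) v
        = rise (-(H:ℝ)) (K-i) * esymm (i+1) (v ∘ k.succAbove)
          + v k * (rise (-(H:ℝ)) (K-i) * esymm i (v ∘ k.succAbove)) := by
    intro i _
    rw [Nat.succ_sub_succ, esymm_rec i v k]
    ring
  rw [Finset.sum_congr rfl h1, Finset.sum_add_distrib, ← Finset.mul_sum]
  rw [esymm_zero']
  have h2 : ∑ m ∈ Finset.range (K+1), rise (-(H:ℝ)) (K+1-m) * esymm m (v ∘ k.succAbove)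
      = (∑ i ∈ Finset.range (K+1), rise (-(H:ℝ)) (K-i) * esymm (i+1) (v ∘ k.succAbove))
        + rise (-(H:ℝ)) (K+1) := by
    rw [Finset.sum_range_succ' (fun m => rise (-(H:ℝ)) (K+1-m) * esymm m (v ∘ k.succAbove)) K]
    rw [Finset.sum_range_succ, esymm_overflow (Nat.lt_succ_self K), esymm_zero']
    simp [Nat.succ_sub_succ]
  rw [h2, D]
  simp only [Nat.sub_zero, Nat.add_comm 1 K]
  ring

lemma G_eq (H K : ℕ) (u : Fin K → ℝ) :
    ∑ m ∈ Finset.range (K+1), rise (-((H+1 : ℕ) : ℝ)) (K+1-m) * esymm m u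
      = -((H:ℝ)+1) * D H K u := by
  rw [D, Finset.mul_sum]
  refine Finset.sum_congr rfl fun m hm => ?_
  have hm' : m ≤ K := Nat.lt_succ_iff.mp (Finset.mem_range.mp hm)
  have h1 : K + 1 - m = (K - m) + 1 := by omega
  rw [h1, rise_succ']
  have h2 : (-((H+1:ℕ):ℝ) + 1) = -(H:ℝ) := by push_cast; ring
  rw [h2]
  push_cast
  ring

lemma identA (H K : ℕ) (v : Fin (K+1) → ℝ) (k : Fin (K+1)) :
    D (H+1) (K+1) v = v k * D (H+1) K (v ∘ k.succAbove)
      - ((H:ℝ)+1) * D H K (v ∘ k.succAbove) := by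
  rw [D_decomp (H+1) K v k, G_eq]
  ring

lemma sum_esymm_succAbove {K : ℕ} (m : ℕ) (hm : m ≤ K + 1) (v : Fin (K+1) → ℝ) :
    ∑ k : Fin (K+1), esymm m (v ∘ k.succAbove) = ((K + 1 - m : ℕ) : ℝ) * esymm m v := by
  have hps : ∀ k : Fin (K+1), (Finset.univ.erase k).powersetCard m
      = (Finset.univ.powersetCard m).filter (fun S => k ∉ S) := by
    intro k
    ext S
    simp only [Finset.mem_powersetCard, Finset.mem_filter, Finset.subset_erase,
      Finset.subset_univ, true_and]
    tauto
  calc ∑ k : Fin (K+1), esymm m (v ∘ k.succAbove)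
      = ∑ k : Fin (K+1), ∑ S ∈ (Finset.univ.powersetCard m).filter (fun S => k ∉ S),
          ∏ j ∈ S, v j := by
        refine Finset.sum_congr rfl fun k _ => ?_
        rw [esymm_comp_succAbove, hps k]
    _ = ∑ k : Fin (K+1), ∑ S ∈ Finset.univ.powersetCard m,
          if k ∉ S then ∏ j ∈ S, v j else 0 := by
        refine Finset.sum_congr rfl fun k _ => ?_
        rw [Finset.sum_filter]
    _ = ∑ S ∈ Finset.univ.powersetCard m, ∑ k : Fin (K+1),
          if k ∉ S then ∏ j ∈ S, v j else 0 := Finset.sum_comm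
    _ = ((K + 1 - m : ℕ) : ℝ) * esymm m v := by
        rw [esymm, Finset.mul_sum]
        refine Finset.sum_congr rfl fun S hS => ?_
        rw [← Finset.sum_filter, Finset.sum_const]
        have hcard : (Finset.univ.filter (fun k => k ∉ S)).card = K + 1 - m := by
          rw [Finset.filter_not, Finset.filter_mem_eq_inter, Finset.univ_inter,
            Finset.card_sdiff_of_subset (Finset.subset_univ S), Finset.card_univ, Fintype.card_fin,
            (Finset.mem_powersetCard.mp hS).2]
        rw [hcard, nsmul_eq_mul]

lemma identB (H K : ℕ) (v : Fin (K+1) → ℝ) :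
    ∑ k : Fin (K+1), D H K (v ∘ k.succAbove) = D H (K+1) v - D (H+1) (K+1) v := by
  have lhs : ∑ k : Fin (K+1), D H K (v ∘ k.succAbove)
      = ∑ m ∈ Finset.range (K+1), rise (-(H:ℝ)) (K-m) * (((K+1-m : ℕ):ℝ) * esymm m v) := by
    simp only [D]
    rw [Finset.sum_comm]
    refine Finset.sum_congr rfl fun m hm => ?_
    have hm' : m ≤ K + 1 := by have := Finset.mem_range.mp hm; omega
    rw [← Finset.mul_sum, sum_esymm_succAbove m hm' v]
  rw [lhs, D, D, ← Finset.sum_sub_distrib]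
  conv_rhs => rw [Finset.sum_range_succ]
  have hz : rise (-(H:ℝ)) (K+1-(K+1)) * esymm (K+1) v
      - rise (-((H+1:ℕ):ℝ)) (K+1-(K+1)) * esymm (K+1) v = 0 := by
    rw [Nat.sub_self, rise_zero, rise_zero]; ring
  rw [hz, add_zero]
  refine Finset.sum_congr rfl fun m hm => ?_
  have hm' : m ≤ K := Nat.lt_succ_iff.mp (Finset.mem_range.mp hm)
  have h3 : ((K + 1 - m : ℕ) : ℝ) = (K:ℝ) + 1 - m := by
    push_cast [Nat.cast_sub (by omega : m ≤ K+1)]; ring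
  rw [h3]
  have h1 : K + 1 - m = (K - m) + 1 := by omega
  rw [h1, rise_succ, rise_succ']
  have h2 : (-((H+1:ℕ):ℝ) + 1) = -(H:ℝ) := by push_cast; ring
  have h4 : ((K - m : ℕ) : ℝ) = (K:ℝ) - m := by
    push_cast [Nat.cast_sub hm']; ring
  rw [h2, h4]
  push_cast
  ring

lemma achievable_one {K : ℕ} {v : Fin K → ℝ} (hv : Achievable K 0 v) :
    ∃ r ∈ simplexInt K, ∀ k, v k = 1 / r k := by
  obtain ⟨Ψ, hΨ, hpay⟩ := hv
  refine ⟨Ψ 0 (fun i => absurd i.isLt (by simp)), hΨ _ _, fun k => ?_⟩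
  have h := hpay (fun _ => k)
  rw [Fin.sum_univ_one] at h
  rw [if_pos rfl] at h
  rw [← h]
  exact congrArg (fun s => 1 / Ψ 0 s k) (funext fun i => absurd i.isLt (by simp))

lemma achievable_peel {K H' : ℕ} {v : Fin K → ℝ} (hv : Achievable K (H'+1) v) :
    ∃ r ∈ simplexInt K, ∀ k0 : Fin K,
      Achievable K H' (fun k => v k - if k = k0 then 1 / r k0 else 0) := by
  obtain ⟨Ψ, hΨ, hpay⟩ := hv
  refine ⟨Ψ 0 (fun i => absurd i.isLt (by simp)), hΨ _ _, fun k0 => ?_⟩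
  refine ⟨fun h hist => Ψ h.succ (Fin.cons k0 hist), fun h hist => hΨ _ _, fun q => ?_⟩
  have hq := hpay (Fin.cons k0 q)
  have hlast : (Fin.cons k0 q : Fin (H'+2) → Fin K) (Fin.last (H'+1)) = q (Fin.last H') := by
    rw [← Fin.succ_last, Fin.cons_succ]
  rw [Fin.sum_univ_succ, hlast] at hq
  have hΨ0 : ∀ f : Fin ((0 : Fin (H'+2)).val) → Fin K,
      Ψ 0 f = Ψ 0 (fun i => absurd i.isLt (by simp)) :=
    fun f => congrArg _ (funext fun i => absurd i.isLt (by simp))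
  rw [hΨ0] at hq
  have hterm : ∀ i : Fin (H'+1),
      (fun j => (Fin.cons k0 q : Fin (H'+2) → Fin K) (Fin.castLE (i.succ).isLt.le j))
        = (Fin.cons k0 (fun j => q (Fin.castLE i.isLt.le j)) : Fin (i.val+1) → Fin K) := by
    intro i
    funext j
    refine Fin.cases ?_ (fun j' => ?_) j
    · rfl
    · rfl
  simp only [Fin.cons_succ, Fin.cons_zero] at hq
  simp only [hterm] at hq
  have : (if k0 = q (Fin.last H')
          then 1 / Ψ 0 (fun i => absurd i.isLt (by simp)) (q (Fin.last H')) else 0)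
      = (if q (Fin.last H') = k0
          then 1 / Ψ 0 (fun i => absurd i.isLt (by simp)) k0 else 0) := by
    rcases eq_or_ne k0 (q (Fin.last H')) with h | h
    · rw [if_pos h, if_pos h.symm, h]
    · rw [if_neg h, if_neg (Ne.symm h)]
  rw [this] at hq
  simp only []
  linarith [hq]

lemma D_zero_eq (K : ℕ) (u : Fin K → ℝ) : D 0 K u = ∏ j, u j := by
  rw [D, Finset.sum_range_succ]
  have h1 : ∀ m ∈ Finset.range K, rise (-((0:ℕ):ℝ)) (K-m) * esymm m u = 0 := by
    intro m hm
    have hm' : m < K := Finset.mem_range.mp hm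
    have h2 : K - m = (K - m - 1) + 1 := by omega
    rw [h2, rise_succ']
    norm_num
  rw [Finset.sum_eq_zero h1, Nat.sub_self, rise_zero, zero_add, one_mul]
  have h3 : (Finset.univ : Finset (Fin K)).powersetCard K = {Finset.univ} := by
    ext S
    simp only [Finset.mem_powersetCard, Finset.mem_singleton, Finset.subset_univ, true_and]
    constructor
    · intro h
      apply Finset.eq_univ_of_card
      rw [h, Fintype.card_fin]
    · rintro rfl
      rw [Finset.card_univ, Fintype.card_fin]
  rw [esymm, h3, Finset.sum_singleton]

lemma key (H' : ℕ) : ∀ (K' : ℕ) (v : Fin (K'+1) → ℝ), Achievable (K'+1) H' v →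
    (∀ k : Fin (K'+1), D H' K' (v ∘ k.succAbove) ≠ 0) ∧
      (∑ k : Fin (K'+1), D H' K' (v ∘ k.succAbove)) = D H' (K'+1) v := by
  induction H' with
  | zero =>
    intro K' v hv
    obtain ⟨r, hr, hvr⟩ := achievable_one hv
    have hvpos : ∀ k, 0 < v k := fun k => by
      rw [hvr k]; exact div_pos one_pos (hr.1 k)
    constructor
    · intro k
      rw [D_zero_eq]
      exact ne_of_gt (Finset.prod_pos fun j _ => hvpos _)
    · have h1 : ∀ k : Fin (K'+1), D 0 K' (v ∘ k.succAbove) = (∏ j, v j) * r k := by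
        intro k
        rw [D_zero_eq]
        have h2 := Fin.prod_univ_succAbove v k
        have hrk : r k = 1 / v k := by
          rw [hvr k]; rw [one_div_one_div]
        rw [hrk, h2, one_div, mul_comm (v k) _, mul_assoc,
          mul_inv_cancel₀ (ne_of_gt (hvpos k)), mul_one]
        rfl
      rw [Finset.sum_congr rfl (fun k _ => h1 k), ← Finset.mul_sum, hr.2, mul_one,
        D_zero_eq]
  | succ H'' IH =>
    intro K' v hv
    obtain ⟨r, hr, hpeel⟩ := achievable_peel hv
    have main : ∀ k, D (H''+1) K' (v ∘ k.succAbove) ≠ 0 ∧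
        D (H''+1) K' (v ∘ k.succAbove) = r k * D (H''+1) (K'+1) v := by
      intro k
      have hw := hpeel k
      set w : Fin (K'+1) → ℝ := fun j => v j - if j = k then 1 / r k else 0 with hwdef
      have hwsub : w ∘ k.succAbove = v ∘ k.succAbove := by
        funext j
        simp only [hwdef, Function.comp_apply, if_neg (Fin.succAbove_ne k j), sub_zero]
      obtain ⟨hne, hsum⟩ := IH K' w hw
      have hBw := identB H'' K' w
      have hw0 : D (H''+1) (K'+1) w = 0 := by rw [hsum] at hBw; linarith
      have hAw := identA H'' K' w k
      rw [hwsub, hw0] at hAw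
      have hnek := hne k
      rw [hwsub] at hnek
      have hX : D (H''+1) K' (v ∘ k.succAbove) ≠ 0 := by
        intro h0
        rw [h0, mul_zero] at hAw
        have hmul : ((H'':ℝ)+1) * D H'' K' (v ∘ k.succAbove) = 0 := by linarith
        rcases mul_eq_zero.mp hmul with h | h
        · exact absurd h (by positivity)
        · exact hnek h
      refine ⟨hX, ?_⟩
      have hAv := identA H'' K' v k
      have hwk : w k = v k - 1 / r k := by simp [hwdef]
      have hrk : r k ≠ 0 := ne_of_gt (hr.1 k)
      -- hAv - hAw : D (H''+1) (K'+1) v - 0 = (v k - w k) * X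
      have hdiff : D (H''+1) (K'+1) v = (1 / r k) * D (H''+1) K' (v ∘ k.succAbove) := by
        rw [hAv]
        rw [hwk] at hAw
        linear_combination -hAw
      rw [hdiff, one_div, ← mul_assoc, mul_inv_cancel₀ hrk, one_mul]
    constructor
    · exact fun k => (main k).1
    · rw [Finset.sum_congr rfl (fun k _ => (main k).2), ← Finset.sum_mul, hr.2, one_mul]

/-- For `H = H'+1 ≥ 1`, `K = K'+1 ≥ 1` and `v` an `H`-achievable vector: each entry
of `v` is determined by the remaining ones, and consequently `D_{H,K}(v) = 0`. -/
theorem achievable_entries_determined (H' K' : ℕ) (v : Fin (K' + 1) → ℝ)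
    (hv : Achievable (K' + 1) H' v) :
    (∀ k : Fin (K' + 1),
      D (H' + 1) K' (v ∘ k.succAbove) ≠ 0 ∧
      v k = ((H' : ℝ) + 1) * D H' K' (v ∘ k.succAbove) / D (H' + 1) K' (v ∘ k.succAbove)) ∧
    D (H' + 1) (K' + 1) v = 0 := by
  obtain ⟨hne, hsum⟩ := key H' K' v hv
  have hB := identB H' K' v
  have hD0 : D (H'+1) (K'+1) v = 0 := by rw [hsum] at hB; linarith
  refine ⟨fun k => ?_, hD0⟩
  have hA := identA H' K' v k
  rw [hD0] at hA
  have hY := hne k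
  have hX : D (H'+1) K' (v ∘ k.succAbove) ≠ 0 := by
    intro h0
    rw [h0, mul_zero] at hA
    have hmul : ((H':ℝ)+1) * D H' K' (v ∘ k.succAbove) = 0 := by linarith
    rcases mul_eq_zero.mp hmul with h | h
    · exact absurd h (by positivity)
    · exact hY h
  refine ⟨hX, ?_⟩
  rw [eq_div_iff hX]
  linear_combination -hA
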